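/- Let 0 < q_{l,0} < q_{h,0} ≤ q_h, set ρ = q_{l,0}/q_{h,0}, and define q̂ = B(ρ, q_h/q_{h,0})·q_h, where B(a, b) = 4 − ((4 − a)²/(2·(1 − a)))·(b − √(b² − 12·(1 − a)·b/(4 − a)²)). Then for every q_l with q_{l,0} ≤ q_l ≤ q̂ and q_l ≤ q_h, neither firm's equilibrium revenue decreases: U_l(q_l, q_h) ≥ U_l(q_{l,0}, q_{h,0}) and U_h(q_l, q_h) ≥ U_h(q_{l,0}, q_{h,0}). -/

import Mathlib

/-- Low-quality firm's equilibrium utility. -/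
noncomputable def Ul (ql qh : ℝ) : ℝ := ql * qh * (qh - ql) / (4 * qh - ql) ^ 2

/-- High-quality firm's equilibrium utility. -/
noncomputable def Uh (ql qh : ℝ) : ℝ := 4 * qh ^ 2 * (qh - ql) / (4 * qh - ql) ^ 2

/-- The quality-ratio bound function of the defection-free scheme. -/
noncomputable def B (a b : ℝ) : ℝ :=
  4 - ((4 - a) ^ 2 / (2 * (1 - a))) *
    (b - Real.sqrt (b ^ 2 - 12 * (1 - a) * b / (4 - a) ^ 2))

/-!
Both utilities are homogeneous of degree one, so with `ρ = q_{l,0}/q_{h,0}`, `b = q_h/q_{h,0}`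
and `x = q_l/q_h` the two claims read `Uh ρ 1 ≤ b · Uh x 1` and `Ul ρ 1 ≤ b · Ul x 1`.
In `t = 4 - x` the first one is the quadratic inequality `t² - 2kbt + 6kb ≤ 0` with
`k = Bcoeff ρ = (4-ρ)²/(2(1-ρ))`, and `4 - B ρ b` is exactly its smaller root, while
`t ≤ kb` holds since `k ≥ 8`. The second follows from the first and
`Ul x 1 = (x/4) · Uh x 1`: if `x ≥ ρ` multiply by `x ≥ ρ`, and if `x ≤ ρ` use `b x ≥ ρ`
(this is `q_l ≥ q_{l,0}`) together with the monotonicity of `Uh · 1`.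
-/

open Real

lemma sq_sub_two_mul_add_nonpos {p q t : ℝ} (hq : q ≤ p ^ 2) (hlow : p - √(p ^ 2 - q) ≤ t)
    (hup : t ≤ p) : t ^ 2 - 2 * p * t + q ≤ 0 := by
  have hsq : (t - p) ^ 2 ≤ √(p ^ 2 - q) ^ 2 :=
    sq_le_sq' (by linarith) (by linarith [sqrt_nonneg (p ^ 2 - q)])
  rw [sq_sqrt (by linarith)] at hsq
  linarith

noncomputable def Bcoeff (ρ : ℝ) : ℝ := (4 - ρ) ^ 2 / (2 * (1 - ρ))

lemma two_mul_one_sub_mul_Bcoeff {ρ : ℝ} (hρ : ρ < 1) :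
    2 * (1 - ρ) * Bcoeff ρ = (4 - ρ) ^ 2 := by
  rw [Bcoeff]
  field_simp [(by linarith : 1 - ρ ≠ 0)]

lemma eight_le_Bcoeff {ρ : ℝ} (hρ0 : 0 ≤ ρ) (hρ1 : ρ < 1) : 8 ≤ Bcoeff ρ := by
  rw [Bcoeff, le_div_iff₀ (by linarith)]
  nlinarith

lemma B_eq_four_sub {ρ : ℝ} (hρ : ρ < 1) (b : ℝ) :
    B ρ b = 4 - (Bcoeff ρ * b - √((Bcoeff ρ * b) ^ 2 - 6 * (Bcoeff ρ * b))) := by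
  have hk0 : 0 ≤ Bcoeff ρ := div_nonneg (sq_nonneg _) (by linarith)
  have hsqrt : Bcoeff ρ * √(b ^ 2 - 12 * (1 - ρ) * b / (4 - ρ) ^ 2) =
      √((Bcoeff ρ * b) ^ 2 - 6 * (Bcoeff ρ * b)) := by
    rw [← sqrt_sq hk0, ← sqrt_mul (sq_nonneg _), sqrt_sq hk0]
    congr 1
    have h1 : 1 - ρ ≠ 0 := by linarith
    have h4 : 4 - ρ ≠ 0 := by linarith
    rw [Bcoeff]
    field_simp
    ring
  rw [B, ← Bcoeff, mul_sub, hsqrt]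

lemma Ul_mul_mul (c a b : ℝ) : Ul (c * a) (c * b) = c * Ul a b := by
  rcases eq_or_ne c 0 with rfl | hc
  · simp [Ul]
  · unfold Ul
    rw [show c * a * (c * b) * (c * b - c * a) = c ^ 3 * (a * b * (b - a)) by ring,
      show (4 * (c * b) - c * a) ^ 2 = c ^ 2 * (4 * b - a) ^ 2 by ring,
      mul_div_mul_comm, pow_succ, mul_div_cancel_left₀ c (pow_ne_zero 2 hc)]

lemma Uh_mul_mul (c a b : ℝ) : Uh (c * a) (c * b) = c * Uh a b := by
  rcases eq_or_ne c 0 with rfl | hc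
  · simp [Uh]
  · unfold Uh
    rw [show 4 * (c * b) ^ 2 * (c * b - c * a) = c ^ 3 * (4 * b ^ 2 * (b - a)) by ring,
      show (4 * (c * b) - c * a) ^ 2 = c ^ 2 * (4 * b - a) ^ 2 by ring,
      mul_div_mul_comm, pow_succ, mul_div_cancel_left₀ c (pow_ne_zero 2 hc)]

lemma Ul_eq_mul_Ul_div_one (a : ℝ) {b : ℝ} (hb : b ≠ 0) : Ul a b = b * Ul (a / b) 1 := by
  rw [← Ul_mul_mul, mul_div_cancel₀ a hb, mul_one]

lemma Uh_eq_mul_Uh_div_one (a : ℝ) {b : ℝ} (hb : b ≠ 0) : Uh a b = b * Uh (a / b) 1 := by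
  rw [← Uh_mul_mul, mul_div_cancel₀ a hb, mul_one]

lemma Ul_one_eq (a : ℝ) : Ul a 1 = a / 4 * Uh a 1 := by
  unfold Ul Uh
  ring

lemma Uh_nonneg {a b : ℝ} (h : a ≤ b) : 0 ≤ Uh a b :=
  div_nonneg (mul_nonneg (by positivity) (sub_nonneg.2 h)) (sq_nonneg _)

lemma antitoneOn_Uh_one : AntitoneOn (Uh · 1) (Set.Icc 0 1) := by
  rintro x ⟨hx0, hx1⟩ y ⟨hy0, hy1⟩ hxy
  simp only [Uh]
  rw [div_le_div_iff₀ (by nlinarith) (by nlinarith)]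
  -- `(1 - x)(4 - y)² - (1 - y)(4 - x)² = (y - x)(8 + x + y - xy)`
  nlinarith [mul_nonneg (sub_nonneg.2 hxy) (by nlinarith : (0 : ℝ) ≤ 8 + x + y - x * y)]

lemma Uh_one_le_mul_Uh_one_of_le_B {ρ b x : ℝ} (hρ0 : 0 ≤ ρ) (hρ1 : ρ < 1) (hb : 1 ≤ b)
    (hx0 : 0 ≤ x) (hxB : x ≤ B ρ b) : Uh ρ 1 ≤ b * Uh x 1 := by
  rw [B_eq_four_sub hρ1] at hxB
  set k := Bcoeff ρ
  have hkb : 8 ≤ k * b := by nlinarith [eight_le_Bcoeff hρ0 hρ1]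
  have hquad : (4 - x) ^ 2 - 2 * (k * b) * (4 - x) + 6 * (k * b) ≤ 0 :=
    sq_sub_two_mul_add_nonpos (by nlinarith) (by linarith) (by linarith)
  have ht : 0 < 4 - x := by
    by_contra! ht
    nlinarith [mul_nonneg (by linarith : 0 ≤ k * b) (neg_nonneg.2 ht), sq_nonneg (4 - x)]
  simp only [Uh, one_pow, mul_one]
  rw [mul_div_assoc', div_le_div_iff₀ (by nlinarith) (by positivity),
    ← two_mul_one_sub_mul_Bcoeff hρ1]
  linarith [mul_le_mul_of_nonneg_left hquad (by linarith : (0 : ℝ) ≤ 4 * (1 - ρ))]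

lemma Ul_one_le_mul_Ul_one {ρ b x : ℝ} (hρ0 : 0 ≤ ρ) (hρ1 : ρ ≤ 1) (hx0 : 0 ≤ x)
    (hx1 : x ≤ 1) (hbx : ρ ≤ b * x) (hUh : Uh ρ 1 ≤ b * Uh x 1) : Ul ρ 1 ≤ b * Ul x 1 := by
  suffices ρ * Uh ρ 1 ≤ b * x * Uh x 1 by
    rw [Ul_one_eq, Ul_one_eq]
    linarith
  rcases le_total ρ x with hρx | hxρ
  · calc ρ * Uh ρ 1 ≤ x * (b * Uh x 1) := mul_le_mul hρx hUh (Uh_nonneg hρ1) hx0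
      _ = b * x * Uh x 1 := by ring
  · exact mul_le_mul hbx (antitoneOn_Uh_one ⟨hx0, hx1⟩ ⟨hρ0, hρ1⟩ hxρ) (Uh_nonneg hρ1)
      (hρ0.trans hbx)

theorem no_revenue_loss_below_threshold
    (ql0 qh0 qh : ℝ) (hql0 : 0 < ql0) (h0 : ql0 < qh0) (hh : qh0 ≤ qh) :
    ∀ ql : ℝ, ql0 ≤ ql → ql ≤ B (ql0 / qh0) (qh / qh0) * qh → ql ≤ qh →
      Ul ql qh ≥ Ul ql0 qh0 ∧ Uh ql qh ≥ Uh ql0 qh0 := by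
  intro ql hql hqlB hqlh
  have hqh0 : 0 < qh0 := by linarith
  have hqh : 0 < qh := by linarith
  have hρ0 : 0 ≤ ql0 / qh0 := by positivity
  have hρ1 : ql0 / qh0 < 1 := (div_lt_one hqh0).2 h0
  have hb : 1 ≤ qh / qh0 := (one_le_div hqh0).2 hh
  have hx0 : 0 ≤ ql / qh := div_nonneg (by linarith) hqh.le
  have hx1 : ql / qh ≤ 1 := (div_le_one hqh).2 hqlh
  have hbx : ql0 / qh0 ≤ qh / qh0 * (ql / qh) := by
    rw [mul_comm, div_mul_div_cancel₀ hqh.ne']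
    gcongr
  have hUh := Uh_one_le_mul_Uh_one_of_le_B hρ0 hρ1 hb hx0 ((div_le_iff₀ hqh).2 hqlB)
  have hUl := Ul_one_le_mul_Ul_one hρ0 hρ1.le hx0 hx1 hbx hUh
  have hscale {u v : ℝ} (h : v ≤ qh / qh0 * u) : qh0 * v ≤ qh * u := by
    have := mul_le_mul_of_nonneg_left h hqh0.le
    rwa [← mul_assoc, mul_div_cancel₀ qh hqh0.ne'] at this
  rw [Ul_eq_mul_Ul_div_one ql hqh.ne', Ul_eq_mul_Ul_div_one ql0 hqh0.ne',
    Uh_eq_mul_Uh_div_one ql hqh.ne', Uh_eq_mul_Uh_div_one ql0 hqh0.ne']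
  exact ⟨hscale hUl, hscale hUh⟩
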